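/- arXiv:1808.05604 — 4 statements merged into one kernel-verified Lean document; each statement's English description precedes it below -/
import Mathlib

section
/- Every eigenvalue λ ∈ ℂ of the matrix J(θ) (with |θ_i − θ_j| < π/2 and nonnegative weights) has nonnegative real part: Re(λ) ≥ 0. -/
/-! Since `|θ i - θ k| < π / 2`, the cosines are nonnegative, so `J(θ)` has nonpositive off-diagonal
entries and zero row sums. Each Gershgorin disc is then centred at `J i i ≥ 0` with radius `J i i`,
hence lies in the closed right half-plane. -/

open Finset Matrix

namespace Matrix

variable {n 𝕜 : Type*} [Fintype n] [DecidableEq n] [RCLike 𝕜]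

theorem re_nonneg_of_hasEigenvalue_of_sum_norm_le_re_diag {A : Matrix n n 𝕜}
    (hA : ∀ i, ∑ j ∈ univ.erase i, ‖A i j‖ ≤ RCLike.re (A i i)) {μ : 𝕜}
    (hμ : Module.End.HasEigenvalue (toLin' A) μ) : 0 ≤ RCLike.re μ := by
  obtain ⟨i, hi⟩ := eigenvalue_mem_ball hμ
  rw [Metric.mem_closedBall, dist_eq_norm] at hi
  have hre : RCLike.re (A i i) - RCLike.re μ ≤ ‖μ - A i i‖ := by
    simpa [abs_sub_comm] using (RCLike.abs_re_le_norm (μ - A i i)).trans' (neg_le_abs _)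
  linarith [hA i]

theorem re_nonneg_of_hasEigenvalue_map_ofReal {A : Matrix n n ℝ}
    (hoff : ∀ i j, i ≠ j → A i j ≤ 0) (hrow : ∀ i, 0 ≤ ∑ j, A i j) {μ : 𝕜}
    (hμ : Module.End.HasEigenvalue (toLin' (A.map (↑))) μ) : 0 ≤ RCLike.re μ := by
  refine re_nonneg_of_hasEigenvalue_of_sum_norm_le_re_diag (fun i => ?_) hμ
  have hnorm : ∀ j ∈ univ.erase i, ‖(A.map ((↑) : ℝ → 𝕜)) i j‖ = -A i j := fun j hj => by
    rw [map_apply, RCLike.norm_ofReal, abs_of_nonpos (hoff i j (ne_of_mem_erase hj).symm)]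
  rw [sum_congr rfl hnorm, map_apply, RCLike.ofReal_re, sum_neg_distrib]
  linarith [hrow i, add_sum_erase univ (A i) (mem_univ i)]

end Matrix

theorem stmt_5 (N : ℕ) (γ : Fin N → Fin N → ℝ) (hγ : ∀ i j, 0 ≤ γ i j)
    (θ : Fin N → ℝ) (hθ : ∀ i j, |θ i - θ j| < Real.pi / 2)
    (J : Matrix (Fin N) (Fin N) ℝ)
    (hJ : ∀ i j, J i j =
      if i = j then ∑ k ∈ univ.filter (fun k => k ≠ i), γ i k * Real.cos (θ i - θ k)
      else -γ i j * Real.cos (θ i - θ j)) :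
    ∀ (μ : ℂ) (v : Fin N → ℂ), v ≠ 0 →
      (J.map (Complex.ofReal)) *ᵥ v = μ • v → 0 ≤ μ.re := by
  intro μ v hv hJv
  have hcos : ∀ i j, 0 ≤ Real.cos (θ i - θ j) := fun i j =>
    Real.cos_nonneg_of_neg_pi_div_two_le_of_le (abs_le.mp (hθ i j).le).1 (abs_le.mp (hθ i j).le).2
  have hoff : ∀ i j, i ≠ j → J i j ≤ 0 := fun i j hij => by
    rw [hJ, if_neg hij, neg_mul, neg_nonpos]
    exact mul_nonneg (hγ i j) (hcos i j)
  have hrow : ∀ i, ∑ j, J i j = 0 := fun i => by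
    rw [← add_sum_erase univ _ (mem_univ i), hJ, if_pos rfl, ← filter_ne', ← sum_add_distrib]
    refine sum_eq_zero fun j hj => ?_
    rw [hJ, if_neg (mem_filter.mp hj).2.symm]
    ring
  have hμ : Module.End.HasEigenvalue (toLin' (J.map Complex.ofReal)) μ :=
    Module.End.hasEigenvalue_of_hasEigenvector
      ⟨Module.End.mem_eigenspace_iff.mpr (by rw [toLin'_apply, hJv]), hv⟩
  exact re_nonneg_of_hasEigenvalue_map_ofReal hoff (fun i => (hrow i).ge) hμ
end

section
/- If a real N×N matrix J has nonpositive off-diagonal entries, J·1 = 0 (zero row sums), every eigenvalue of J has nonnegative real part, and the matrix obtained by deleting any one row and the corresponding column of J is invertible, then the kernel of J (as a linear map on ℝ^N) is exactly the span of the all-ones vector 1. -/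
/-!
The all-ones vector lies in the kernel. Conversely, if `J v = 0`, then `u = v - v i • 1` is a kernel
vector with `u i = 0`; the rows of `J u = 0` other than row `i` say that the principal submatrix
obtained by deleting row and column `i` kills `u` with its `i`-th entry removed, so invertibility of
that submatrix forces `u = 0`.
-/

open Matrix

namespace Matrix

variable {R : Type*} [CommRing R] {n : ℕ}

theorem submatrix_succAbove_mulVec_comp_succAbove {l m : Type*} (A : Matrix m (Fin (n + 1)) R)
    (r : l → m) {i : Fin (n + 1)} {v : Fin (n + 1) → R} (hvi : v i = 0) :
    A.submatrix r i.succAbove *ᵥ (v ∘ i.succAbove) = (A *ᵥ v) ∘ r := by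
  funext j
  simp [mulVec, dotProduct, Fin.sum_univ_succAbove _ i, hvi]

theorem eq_zero_of_mulVec_eq_zero_of_isUnit_submatrix (A : Matrix (Fin (n + 1)) (Fin (n + 1)) R)
    {i : Fin (n + 1)} (hA : IsUnit (A.submatrix i.succAbove i.succAbove))
    {v : Fin (n + 1) → R} (hv : A *ᵥ v = 0) (hvi : v i = 0) : v = 0 := by
  have hsub : A.submatrix i.succAbove i.succAbove *ᵥ (v ∘ i.succAbove) = 0 := by
    rw [submatrix_succAbove_mulVec_comp_succAbove A _ hvi, hv, Pi.zero_comp]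
  have hrest : v ∘ i.succAbove = 0 :=
    mulVec_injective_of_isUnit hA (hsub.trans (mulVec_zero _).symm)
  funext k
  induction k using Fin.succAboveCases i with
  | x => exact hvi
  | p j => exact congrFun hrest j

theorem ker_mulVecLin_eq_span_of_isUnit_submatrix (A : Matrix (Fin (n + 1)) (Fin (n + 1)) R)
    {i : Fin (n + 1)} (hA : IsUnit (A.submatrix i.succAbove i.succAbove))
    {b : Fin (n + 1) → R} (hb : A *ᵥ b = 0) (hbi : b i = 1) :
    LinearMap.ker A.mulVecLin = Submodule.span R {b} := by
  refine le_antisymm (fun v hv => ?_) ?_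
  · have hv : A *ᵥ v = 0 := hv
    have hzero : v - v i • b = 0 :=
      eq_zero_of_mulVec_eq_zero_of_isUnit_submatrix A hA
        (by rw [mulVec_sub, mulVec_smul, hv, hb, smul_zero, sub_zero]) (by simp [hbi])
    rw [sub_eq_zero.mp hzero]
    exact Submodule.smul_mem _ _ (Submodule.mem_span_singleton_self b)
  · rw [Submodule.span_le, Set.singleton_subset_iff]
    exact hb

end Matrix

theorem stmt_14_general (N : ℕ) (J : Matrix (Fin (N + 1)) (Fin (N + 1)) ℝ)
    (hrow : J *ᵥ (fun _ => (1 : ℝ)) = 0)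
    (hinv : ∃ i : Fin (N + 1), IsUnit (J.submatrix i.succAbove i.succAbove)) :
    LinearMap.ker J.mulVecLin = Submodule.span ℝ {fun _ => (1 : ℝ)} := by
  obtain ⟨i, hJi⟩ := hinv
  exact J.ker_mulVecLin_eq_span_of_isUnit_submatrix hJi hrow rfl

theorem stmt_14 (N : ℕ) (J : Matrix (Fin (N + 1)) (Fin (N + 1)) ℝ)
    (hoff : ∀ i j, i ≠ j → J i j ≤ 0)
    (hrow : J *ᵥ (fun _ => (1 : ℝ)) = 0)
    (heig : ∀ (μ : ℂ) (w : Fin (N + 1) → ℂ), w ≠ 0 →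
      (J.map (Complex.ofReal)) *ᵥ w = μ • w → 0 ≤ μ.re)
    (hinv : ∃ i : Fin (N + 1), IsUnit (J.submatrix i.succAbove i.succAbove)) :
    LinearMap.ker J.mulVecLin = Submodule.span ℝ {fun _ => (1 : ℝ)} :=
  stmt_14_general N J hrow hinv
end

section
/- Let P be an (N−1)×N real matrix whose rows form an orthonormal basis of the hyperplane 1^⊥ ⊆ ℝ^N. Then the (N−1)×(N−1) minor P_î obtained by deleting the i-th column of P satisfies |det(P_î)| = 1/√N for every i. -/
/-!
Adjoining the unit vector `(1/√N) • 1` to `P` as a first row gives an orthogonal matrix `Q`.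
For orthogonal `Q` the adjugate is `det Q • Qᵀ` with `|det Q| = 1`, so every cofactor has the
absolute value of the corresponding entry. The cofactor at `(0, i)` is `± det P_î`, and the entry
there is `1/√N`.
-/

open Finset Matrix

namespace Matrix

variable {R ι : Type*} [CommRing R] [Fintype ι]

theorem of_vecCons_mul_transpose_eq_one {m : ℕ} (v : ι → R) (P : Matrix (Fin m) ι R)
    (hP : P * Pᵀ = 1) (hPv : P *ᵥ v = 0) (hv : v ⬝ᵥ v = 1) :
    of (vecCons v (of.symm P)) * (of (vecCons v (of.symm P)))ᵀ = 1 := by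
  ext r c
  refine Fin.cases ?_ (fun j => ?_) r <;> refine Fin.cases ?_ (fun j' => ?_) c
  · simpa [mul_apply, dotProduct] using hv
  · simpa [mul_apply, mulVec, dotProduct, mul_comm, one_apply_ne (Fin.succ_ne_zero j').symm]
      using congrFun hPv j'
  · simpa [mul_apply, mulVec, dotProduct] using congrFun hPv j
  · simpa [mul_apply, one_apply] using congrFun (congrFun hP j) j'

variable [DecidableEq ι]

theorem adjugate_eq_det_smul_transpose {A : Matrix ι ι R} (hA : A * Aᵀ = 1) :
    adjugate A = A.det • Aᵀ :=
  calc adjugate A = adjugate A * A * Aᵀ := by rw [Matrix.mul_assoc, hA, Matrix.mul_one]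
    _ = A.det • Aᵀ := by rw [adjugate_mul, smul_mul, Matrix.one_mul]

variable [LinearOrder R] [IsStrictOrderedRing R]

theorem abs_det_eq_one_of_mul_transpose_eq_one {A : Matrix ι ι R} (hA : A * Aᵀ = 1) :
    |A.det| = 1 := by
  have h := congrArg det hA
  rw [det_mul, det_transpose, det_one] at h
  rcases mul_self_eq_one_iff.mp h with h | h <;> simp [h]

theorem abs_det_submatrix_succAbove_of_mul_transpose_eq_one {n : ℕ}
    {A : Matrix (Fin (n + 1)) (Fin (n + 1)) R} (hA : A * Aᵀ = 1) (i j : Fin (n + 1)) :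
    |(A.submatrix i.succAbove j.succAbove).det| = |A i j| := by
  have h := congrFun (congrFun (adjugate_eq_det_smul_transpose hA) j) i
  rw [adjugate_fin_succ_eq_det_submatrix] at h
  simpa [abs_mul, abs_det_eq_one_of_mul_transpose_eq_one hA] using congrArg abs h

end Matrix

theorem stmt_15_general (n : ℕ) (P : Matrix (Fin n) (Fin (n + 1)) ℝ)
    (hPP : P * P.transpose = 1)
    (hP1 : P *ᵥ (fun _ => (1 : ℝ)) = 0) :
    ∀ i : Fin (n + 1),
      |(P.submatrix id i.succAbove).det| = 1 / Real.sqrt (n + 1) := by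
  intro i
  set u : Fin (n + 1) → ℝ := fun _ => (Real.sqrt (n + 1))⁻¹
  have hPu : P *ᵥ u = 0 := by
    rw [show u = (Real.sqrt (n + 1))⁻¹ • fun _ => 1 by ext; simp [u], mulVec_smul, hP1, smul_zero]
  have hu : u ⬝ᵥ u = 1 := by
    have hN : (0 : ℝ) < n + 1 := by positivity
    simp [u, dotProduct, ← mul_inv, Real.mul_self_sqrt hN.le, hN.ne']
  have hminor : (of (vecCons u (of.symm P))).submatrix (Fin.succAbove 0) i.succAbove =
      P.submatrix id i.succAbove := rfl
  rw [← hminor, abs_det_submatrix_succAbove_of_mul_transpose_eq_one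
    (of_vecCons_mul_transpose_eq_one u P hPP hPu hu), of_apply, cons_val_zero,
    abs_of_pos (by positivity), one_div]

theorem stmt_15 (n : ℕ) (hn : 1 ≤ n) (P : Matrix (Fin n) (Fin (n + 1)) ℝ)
    (hPP : P * P.transpose = 1)
    (hP1 : P *ᵥ (fun _ => (1 : ℝ)) = 0) :
    ∀ i : Fin (n + 1),
      |(P.submatrix id i.succAbove).det| = 1 / Real.sqrt (n + 1) :=
  stmt_15_general n P hPP hP1
end

section
/- Let P be an (N−1)×N matrix with orthonormal rows spanning 1^⊥ and let J be an N×N matrix with J·1 = 0 and 1ᵀJ = 0 (zero row and column sums), and let J_{ij} denote J with row i and column j deleted. Then det(P J Pᵀ) = (Σ_{i,j} (−1)^{i+j} det(J_{ij})) / N. -/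
open Finset Matrix

theorem stmt_16 (n : ℕ) (hn : 1 ≤ n) (P : Matrix (Fin n) (Fin (n + 1)) ℝ)
    (hPP : P * P.transpose = 1)
    (hP1 : P *ᵥ (fun _ => (1 : ℝ)) = 0)
    (J : Matrix (Fin (n + 1)) (Fin (n + 1)) ℝ)
    (hJ1 : J *ᵥ (fun _ => (1 : ℝ)) = 0)
    (hJ1' : J.transpose *ᵥ (fun _ => (1 : ℝ)) = 0) :
    (P * J * P.transpose).det =
      (1 / (n + 1 : ℝ)) * ∑ i : Fin (n + 1), ∑ j : Fin (n + 1),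
        (-1 : ℝ) ^ ((i : ℕ) + (j : ℕ)) * (J.submatrix i.succAbove j.succAbove).det := by
  haveI : NeZero n := ⟨by omega⟩
  have hNpos : (0:ℝ) < (n+1 : ℝ) := by positivity
  set s : ℝ := 1 / Real.sqrt ((n:ℝ)+1) with hs
  have hsq : s * s = 1 / ((n:ℝ)+1) := by
    rw [hs, div_mul_div_comm, one_mul, Real.mul_self_sqrt hNpos.le]
  set Q : Matrix (Fin (n+1)) (Fin (n+1)) ℝ :=
    Matrix.of (Fin.cons (fun _ => s) (fun i => P i)) with hQdef
  have hQ0 : ∀ k, Q 0 k = s := fun k => by simp [hQdef]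
  have hQs : ∀ i k, Q i.succ k = P i k := fun i k => by simp [hQdef]
  have hProw : ∀ i, ∑ k, P i k = 0 := by
    intro i
    have h := congrFun hP1 i
    simpa [Matrix.mulVec, dotProduct] using h
  have hJrow : ∀ i, ∑ k, J i k = 0 := by
    intro i
    have h := congrFun hJ1 i
    simpa [Matrix.mulVec, dotProduct] using h
  have hJcol : ∀ l, ∑ k, J k l = 0 := by
    intro l
    have h := congrFun hJ1' l
    simpa [Matrix.mulVec, dotProduct, Matrix.transpose_apply] using h
  have hQ : Q * Q.transpose = 1 := by
    ext i j
    rw [Matrix.mul_apply]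
    simp only [Matrix.transpose_apply]
    induction i using Fin.cases with
    | zero =>
      induction j using Fin.cases with
      | zero =>
        simp only [hQ0, Matrix.one_apply_eq, Finset.sum_const, Finset.card_univ,
          Fintype.card_fin, nsmul_eq_mul, hsq]
        push_cast
        field_simp
      | succ j =>
        rw [Matrix.one_apply_ne (Fin.succ_ne_zero j).symm]
        simp only [hQ0, hQs, ← Finset.mul_sum, hProw, mul_zero]
    | succ i =>
      induction j using Fin.cases with
      | zero =>
        rw [Matrix.one_apply_ne (Fin.succ_ne_zero i)]
        simp only [hQ0, hQs, ← Finset.sum_mul, hProw, zero_mul]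
      | succ j =>
        have h := congrFun (congrFun hPP i) j
        rw [Matrix.mul_apply] at h
        simp only [Matrix.transpose_apply] at h
        simp only [hQs, h]
        by_cases hij : i = j
        · subst hij; simp
        · rw [Matrix.one_apply_ne (fun hc => hij (Fin.succ_injective _ hc)),
            Matrix.one_apply_ne hij]
  have hQ' : Q.transpose * Q = 1 := mul_eq_one_comm.mp hQ
  have hdet : Q.det * Q.det = 1 := by
    have h := congrArg Matrix.det hQ
    rwa [Matrix.det_mul, Matrix.det_transpose, Matrix.det_one] at h
  set M : Matrix (Fin (n+1)) (Fin (n+1)) ℝ := Q * J * Q.transpose with hM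
  have hQJ : ∀ l, (Q * J) 0 l = 0 := by
    intro l
    rw [Matrix.mul_apply]
    simp only [hQ0, ← Finset.mul_sum, hJcol, mul_zero]
  have hJQ : ∀ k, (J * Q.transpose) k 0 = 0 := by
    intro k
    rw [Matrix.mul_apply]
    simp only [Matrix.transpose_apply, hQ0, ← Finset.sum_mul, hJrow, zero_mul]
  have hrow : ∀ j, M 0 j = 0 := by
    intro j
    rw [hM, Matrix.mul_apply]
    simp [hQJ]
  have hcol : ∀ i, M i 0 = 0 := by
    intro i
    rw [hM, Matrix.mul_assoc, Matrix.mul_apply]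
    simp [hJQ]
  have hsub : M.submatrix Fin.succ Fin.succ = P * J * P.transpose := by
    ext i j
    rw [Matrix.submatrix_apply, hM]
    simp only [Matrix.mul_apply, Matrix.transpose_apply, hQs]
  set d : ℝ := (P * J * P.transpose).det with hd
  have hadjM : ∀ i j, Matrix.adjugate M i j = if i = 0 ∧ j = 0 then d else 0 := by
    intro i j
    rw [Matrix.adjugate_fin_succ_eq_det_submatrix]
    induction j using Fin.cases with
    | zero =>
      induction i using Fin.cases with
      | zero =>
        simp [Fin.succAbove_zero, hsub, hd]
      | succ i =>
        rw [Matrix.det_eq_zero_of_column_eq_zero 0, mul_zero, if_neg]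
        · rintro ⟨hc, -⟩; exact Fin.succ_ne_zero i hc
        · intro k
          rw [Matrix.submatrix_apply]
          rw [Fin.succ_succAbove_zero]
          exact hcol _
    | succ j =>
      rw [Matrix.det_eq_zero_of_row_eq_zero 0, mul_zero, if_neg]
      · rintro ⟨-, hc⟩; exact Fin.succ_ne_zero j hc
      · intro k
        rw [Matrix.submatrix_apply]
        rw [Fin.succ_succAbove_zero]
        exact hrow _
  have hJeq : Q.transpose * M * Q = J := by
    rw [hM]
    simp only [← Matrix.mul_assoc]
    rw [hQ', Matrix.one_mul, Matrix.mul_assoc, hQ', Matrix.mul_one]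
  have adjQ : Matrix.adjugate Q = Q.det • Q.transpose := by
    calc Matrix.adjugate Q = Matrix.adjugate Q * (Q * Q.transpose) := by
          rw [hQ, Matrix.mul_one]
      _ = (Matrix.adjugate Q * Q) * Q.transpose := (Matrix.mul_assoc _ _ _).symm
      _ = (Q.det • (1 : Matrix (Fin (n+1)) (Fin (n+1)) ℝ)) * Q.transpose := by
          rw [Matrix.adjugate_mul]
      _ = Q.det • Q.transpose := by rw [Matrix.smul_mul, Matrix.one_mul]
  have adjQT : Matrix.adjugate Q.transpose = Q.det • Q := by
    calc Matrix.adjugate Q.transpose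
        = Matrix.adjugate Q.transpose * (Q.transpose * Q) := by rw [hQ', Matrix.mul_one]
      _ = (Matrix.adjugate Q.transpose * Q.transpose) * Q := (Matrix.mul_assoc _ _ _).symm
      _ = (Q.transpose.det • (1 : Matrix (Fin (n+1)) (Fin (n+1)) ℝ)) * Q := by
          rw [Matrix.adjugate_mul]
      _ = Q.det • Q := by rw [Matrix.det_transpose, Matrix.smul_mul, Matrix.one_mul]
  have hadjJ : Matrix.adjugate J = Q.transpose * Matrix.adjugate M * Q := by
    rw [← hJeq, Matrix.adjugate_mul_distrib, Matrix.adjugate_mul_distrib, adjQ, adjQT]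
    simp only [Matrix.smul_mul, Matrix.mul_smul, smul_smul]
    rw [hdet, one_smul, Matrix.mul_assoc]
  have hadjJ' : ∀ a b, Matrix.adjugate J a b = d * (1 / ((n:ℝ)+1)) := by
    intro a b
    rw [hadjJ, Matrix.mul_apply]
    rw [Fintype.sum_eq_single (0 : Fin (n+1)) (fun l hl => by
      have hz : (Q.transpose * Matrix.adjugate M) a l = 0 := by
        rw [Matrix.mul_apply]
        exact Finset.sum_eq_zero fun k _ => by
          rw [hadjM, if_neg (fun hc => hl hc.2), mul_zero]
      rw [hz, zero_mul])]
    rw [Matrix.mul_apply]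
    rw [Fintype.sum_eq_single (0 : Fin (n+1)) (fun k hk => by
      rw [hadjM, if_neg (fun hc => hk hc.1), mul_zero])]
    rw [hadjM, if_pos ⟨rfl, rfl⟩, Matrix.transpose_apply, hQ0, hQ0]
    rw [mul_comm s d, mul_assoc, hsq]
  have hterm : ∀ i j : Fin (n+1),
      (-1 : ℝ) ^ ((i : ℕ) + (j : ℕ)) * (J.submatrix i.succAbove j.succAbove).det
        = d * (1 / ((n:ℝ)+1)) := by
    intro i j
    rw [← Matrix.adjugate_fin_succ_eq_det_submatrix J j i]
    exact hadjJ' j i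
  simp only [hterm, Finset.sum_const, Finset.card_univ, Fintype.card_fin, nsmul_eq_mul]
  push_cast
  field_simp
end
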